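/- (König's theorem) Let G = (V,E) be a bipartite graph. Then the maximum cardinality of a matching of G equals the minimum cardinality of a vertex cover of G. -/

import Mathlib

/-!
A vertex cover meets every edge of a matching in a vertex of its own, which gives `≤`.
Conversely, let `U` be a minimum vertex cover. For an independent `S ⊆ U`, the set obtained
from `U` by replacing `S` with its neighbours outside `U` is again a cover, so minimality gives
Hall's condition `#S ≤ #(N(S) \ U)`. In a bipartite graph every `S ⊆ U` splits into two
independent halves whose outside neighbourhoods lie in opposite parts, so Hall's condition holds
for all of `U`. Hall's theorem then matches each `u ∈ U` to a distinct neighbour outside `U`,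
and these `#U` edges form a matching.
-/

open Finset

namespace SimpleGraph

variable {V : Type*} {G : SimpleGraph V}

def IsEdgeMatching (G : SimpleGraph V) (M : Finset (Sym2 V)) : Prop :=
  (∀ e ∈ M, e ∈ G.edgeSet) ∧ ∀ e₁ ∈ M, ∀ e₂ ∈ M, e₁ ≠ e₂ → ∀ v : V, ¬(v ∈ e₁ ∧ v ∈ e₂)

theorem isVertexCover_iff_forall_mem_edgeSet {c : Set V} :
    G.IsVertexCover c ↔ ∀ e ∈ G.edgeSet, ∃ v ∈ c, v ∈ e := by
  refine ⟨fun hc e he => ?_, fun hc v w hvw => ?_⟩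
  · induction e using Sym2.ind with
    | _ v w => rcases hc he with h | h <;> exact ⟨_, h, by simp⟩
  · obtain ⟨u, hu, hue⟩ := hc s(v, w) hvw
    rcases Sym2.mem_iff.mp hue with rfl | rfl
    exacts [Or.inl hu, Or.inr hu]

theorem IsEdgeMatching.card_le_card_of_isVertexCover {M : Finset (Sym2 V)} {U : Finset V}
    (hM : G.IsEdgeMatching M) (hU : G.IsVertexCover ↑U) : #M ≤ #U :=
  card_le_card_of_forall_subsingleton (fun e v => v ∈ e)
    (fun e he => isVertexCover_iff_forall_mem_edgeSet.mp hU e (hM.1 e he))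
    (fun v _ e₁ h₁ e₂ h₂ => by_contra fun hne => hM.2 e₁ h₁.1 e₂ h₂.1 hne v ⟨h₁.2, h₂.2⟩)

theorem exists_isEdgeMatching_card_eq_of_injective {U : Finset V} (f : U → V)
    (hf : Function.Injective f) (hadj : ∀ u : U, G.Adj u (f u)) (hout : ∀ u : U, f u ∉ U) :
    ∃ M : Finset (Sym2 V), G.IsEdgeMatching M ∧ #M = #U := by
  classical
  -- `u` is the only endpoint of `s(u, f u)` lying in `U`.
  have hedge : Function.Injective fun u : U => s(↑u, f u) := by
    intro u u' h
    have hu : (u : V) ∈ s(↑u', f u') :=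
      (show s(↑u, f u) = s(↑u', f u') from h) ▸ Sym2.mem_mk_left _ _
    rcases Sym2.mem_iff.mp hu with h' | h'
    · exact Subtype.ext h'
    · exact (hout u' (h' ▸ u.2)).elim
  refine ⟨univ.image fun u : U => s(↑u, f u), ⟨?_, ?_⟩, ?_⟩
  · simp only [mem_image, mem_univ, true_and, forall_exists_index, forall_apply_eq_imp_iff]
    exact hadj
  · simp only [mem_image, mem_univ, true_and]
    rintro _ ⟨u, rfl⟩ _ ⟨u', rfl⟩ hne v ⟨hv, hv'⟩
    rcases Sym2.mem_iff.mp hv with rfl | rfl <;> rcases Sym2.mem_iff.mp hv' with h | h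
    · exact hne (by rw [Subtype.ext h])
    · exact hout u' (h ▸ u.2)
    · exact hout u (h ▸ u'.2)
    · exact hne (by rw [hf h])
  · rw [card_image_of_injective _ hedge, card_univ, Fintype.card_coe]

theorem IsBipartiteWith.isIndepSet_of_subset {s t u : Set V} (h : G.IsBipartiteWith s t)
    (hu : u ⊆ s) : G.IsIndepSet u :=
  fun _ hv _ hw _ hvw => Set.disjoint_left.mp h.disjoint (hu hw) (h.mem_of_mem_adj (hu hv) hvw)

section LocallyFinite

variable [DecidableEq V] [G.LocallyFinite]

theorem IsVertexCover.sdiff_union_biUnion_of_isIndepSet {U S : Finset V}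
    (hU : G.IsVertexCover ↑U) (hS : G.IsIndepSet ↑S) :
    G.IsVertexCover ↑(U \ S ∪ S.biUnion fun v => G.neighborFinset v \ U) := by
  set W := U \ S ∪ S.biUnion fun v => G.neighborFinset v \ U
  have key : ∀ ⦃v w⦄, G.Adj v w → v ∈ U → v ∈ W ∨ w ∈ W := by
    intro v w hvw hv
    by_cases hvS : v ∈ S
    · have hwS : w ∉ S := fun hwS => hS hvS hwS hvw.ne hvw
      by_cases hwU : w ∈ U
      · exact Or.inr (mem_union_left _ (mem_sdiff.mpr ⟨hwU, hwS⟩))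
      · exact Or.inr (mem_union_right _ (mem_biUnion.mpr
          ⟨v, hvS, mem_sdiff.mpr ⟨(G.mem_neighborFinset v w).mpr hvw, hwU⟩⟩))
    · exact Or.inl (mem_union_left _ (mem_sdiff.mpr ⟨hv, hvS⟩))
  intro v w hvw
  rcases hU hvw with hv | hw
  · exact key hvw hv
  · exact (key hvw.symm hw).symm

theorem card_le_card_biUnion_of_isIndepSet {U S : Finset V} (hU : G.IsVertexCover ↑U)
    (hmin : ∀ U' : Finset V, G.IsVertexCover ↑U' → #U ≤ #U') (hSU : S ⊆ U)
    (hS : G.IsIndepSet ↑S) : #S ≤ #(S.biUnion fun v => G.neighborFinset v \ U) := by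
  have := hmin _ (hU.sdiff_union_biUnion_of_isIndepSet hS)
  have := card_union_le (U \ S) (S.biUnion fun v => G.neighborFinset v \ U)
  have := card_sdiff_of_subset hSU
  have := card_le_card hSU
  omega

theorem IsBipartiteWith.card_le_card_biUnion {s : Set V} (hG : G.IsBipartiteWith s sᶜ)
    {U S : Finset V} (hU : G.IsVertexCover ↑U)
    (hmin : ∀ U' : Finset V, G.IsVertexCover ↑U' → #U ≤ #U') (hSU : S ⊆ U) :
    #S ≤ #(S.biUnion fun v => G.neighborFinset v \ U) := by
  classical
  set N := fun T : Finset V => T.biUnion fun v => G.neighborFinset v \ U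
  set S₁ := S.filter (· ∈ s)
  set S₂ := S.filter (· ∉ s)
  have h₁ := card_le_card_biUnion_of_isIndepSet hU hmin ((filter_subset _ S).trans hSU)
    (hG.isIndepSet_of_subset (s := s) (u := ↑S₁) fun _ hv => (mem_filter.mp hv).2)
  have h₂ := card_le_card_biUnion_of_isIndepSet hU hmin ((filter_subset _ S).trans hSU)
    (hG.symm.isIndepSet_of_subset (s := sᶜ) (u := ↑S₂) fun _ hv => (mem_filter.mp hv).2)
  have hdisj : Disjoint (N S₁) (N S₂) := by
    refine Finset.disjoint_left.mpr fun w hw₁ hw₂ => ?_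
    simp only [N, S₁, S₂, mem_biUnion, mem_filter, mem_sdiff, mem_neighborFinset] at hw₁ hw₂
    obtain ⟨v, ⟨-, hv⟩, hvw, -⟩ := hw₁
    obtain ⟨v', ⟨-, hv'⟩, hv'w, -⟩ := hw₂
    exact hG.mem_of_mem_adj hv hvw (hG.symm.mem_of_mem_adj hv' hv'w)
  calc #S = #S₁ + #S₂ := (card_filter_add_card_filter_not _).symm
    _ ≤ #(N S₁) + #(N S₂) := add_le_add h₁ h₂
    _ = #(N S) := by
      rw [← card_union_of_disjoint hdisj, ← union_biUnion, filter_union_filter_not_eq]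

theorem IsBipartiteWith.exists_injective_adj_notMem {s : Set V} (hG : G.IsBipartiteWith s sᶜ)
    {U : Finset V} (hU : G.IsVertexCover ↑U)
    (hmin : ∀ U' : Finset V, G.IsVertexCover ↑U' → #U ≤ #U') :
    ∃ f : U → V, Function.Injective f ∧ ∀ u : U, G.Adj u (f u) ∧ f u ∉ U := by
  obtain ⟨f, hf, hfN⟩ := (all_card_le_biUnion_card_iff_exists_injective
    fun u : U => G.neighborFinset u \ U).mp fun S : Finset U => by
      simpa [card_image_of_injective _ Subtype.val_injective, image_biUnion] using
        hG.card_le_card_biUnion hU hmin (S := S.image Subtype.val)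
          (image_subset_iff.mpr fun u _ => u.2)
  exact ⟨f, hf, fun u => by simpa using hfN u⟩

end LocallyFinite

theorem exists_isVertexCover_forall_card_le [Finite V] :
    ∃ U : Finset V, G.IsVertexCover ↑U ∧ ∀ U' : Finset V, G.IsVertexCover ↑U' → #U ≤ #U' := by
  classical
  have := Fintype.ofFinite V
  obtain ⟨U, hU, hmin⟩ := exists_min_image ({U | G.IsVertexCover ↑U} : Finset (Finset V)) card
    ⟨univ, by simp⟩
  exact ⟨U, (mem_filter.mp hU).2, fun U' hU' => hmin U' (by simpa using hU')⟩

end SimpleGraph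

theorem konig_general {V : Type*} [Fintype V]
    (G : SimpleGraph V)
    (hbip : ∃ s : Set V, ∀ u v : V, G.Adj u v → (u ∈ s ∧ v ∉ s) ∨ (u ∉ s ∧ v ∈ s)) :
    ∃ vopt : ℕ,
      IsGreatest {k : ℕ | ∃ M : Finset (Sym2 V),
          (∀ e ∈ M, e ∈ G.edgeSet) ∧
          (∀ e₁ ∈ M, ∀ e₂ ∈ M, e₁ ≠ e₂ → ∀ v : V, ¬(v ∈ e₁ ∧ v ∈ e₂)) ∧
          k = M.card} vopt ∧
      IsLeast {k : ℕ | ∃ U : Finset V,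
          (∀ e ∈ G.edgeSet, ∃ v ∈ U, v ∈ e) ∧
          k = U.card} vopt := by
  classical
  obtain ⟨s, hs⟩ := hbip
  have hG : G.IsBipartiteWith s sᶜ := ⟨disjoint_compl_right, hs⟩
  obtain ⟨U, hU, hmin⟩ := G.exists_isVertexCover_forall_card_le
  obtain ⟨f, hf, hfU⟩ := hG.exists_injective_adj_notMem hU hmin
  obtain ⟨M, hM, hMU⟩ := SimpleGraph.exists_isEdgeMatching_card_eq_of_injective f hf
    (fun u => (hfU u).1) (fun u => (hfU u).2)
  refine ⟨#U, ⟨⟨M, hM.1, hM.2, hMU.symm⟩, ?_⟩, ⟨U, ?_, rfl⟩, ?_⟩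
  · rintro _ ⟨M', hM'G, hM'disj, rfl⟩
    exact SimpleGraph.IsEdgeMatching.card_le_card_of_isVertexCover ⟨hM'G, hM'disj⟩ hU
  · exact SimpleGraph.isVertexCover_iff_forall_mem_edgeSet.mp hU
  · rintro _ ⟨U', hU', rfl⟩
    exact hmin U' (SimpleGraph.isVertexCover_iff_forall_mem_edgeSet.mpr hU')

/-- König's theorem: in a bipartite graph, the maximum cardinality of a matching
equals the minimum cardinality of a vertex cover. -/
theorem konig {V : Type*} [Fintype V] [DecidableEq V]
    (G : SimpleGraph V)
    (hbip : ∃ s : Set V, ∀ u v : V, G.Adj u v → (u ∈ s ∧ v ∉ s) ∨ (u ∉ s ∧ v ∈ s)) :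
    ∃ vopt : ℕ,
      IsGreatest {k : ℕ | ∃ M : Finset (Sym2 V),
          (∀ e ∈ M, e ∈ G.edgeSet) ∧
          (∀ e₁ ∈ M, ∀ e₂ ∈ M, e₁ ≠ e₂ → ∀ v : V, ¬(v ∈ e₁ ∧ v ∈ e₂)) ∧
          k = M.card} vopt ∧
      IsLeast {k : ℕ | ∃ U : Finset V,
          (∀ e ∈ G.edgeSet, ∃ v ∈ U, v ∈ e) ∧
          k = U.card} vopt :=
  konig_general G hbip
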